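/- Forward slicing is monotone: if e ⇒ v, e₁ ⊑ e₂ ⊑ e, e₁ ↗ v₁, and e₂ ↗ v₂, then v₁ ⊑ v₂. -/
import Mathlib


/-- Partial expressions of the simple language, with holes. -/
inductive Expr where
  | hole : Expr
  | num : ℕ → Expr
  | add : Expr → Expr → Expr
  | pair : Expr → Expr → Expr
  | fst : Expr → Expr
  | snd : Expr → Expr
deriving DecidableEq

/-- The prefix relation ⊑ on partial expressions. -/
inductive Sq : Expr → Expr → Prop where
  | hole : ∀ e, Sq Expr.hole e
  | num : ∀ n, Sq (Expr.num n) (Expr.num n)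
  | add : ∀ {a a' b b'}, Sq a a' → Sq b b' → Sq (Expr.add a b) (Expr.add a' b')
  | pair : ∀ {a a' b b'}, Sq a a' → Sq b b' → Sq (Expr.pair a b) (Expr.pair a' b')
  | fst : ∀ {a a'}, Sq a a' → Sq (Expr.fst a) (Expr.fst a')
  | snd : ∀ {a a'}, Sq a a' → Sq (Expr.snd a) (Expr.snd a')

/-- Partial values, with holes. -/
inductive Val where
  | hole : Val
  | num : ℕ → Val
  | pair : Val → Val → Val
deriving DecidableEq

/-- The prefix relation ⊑ on partial values. -/
inductive VSq : Val → Val → Prop where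
  | hole : ∀ v, VSq Val.hole v
  | num : ∀ n, VSq (Val.num n) (Val.num n)
  | pair : ∀ {a a' b b'}, VSq a a' → VSq b b' → VSq (Val.pair a b) (Val.pair a' b')

/-- Big-step evaluation. -/
inductive Eval : Expr → Val → Prop where
  | num : ∀ n, Eval (Expr.num n) (Val.num n)
  | add : ∀ {a b n m}, Eval a (Val.num n) → Eval b (Val.num m) →
      Eval (Expr.add a b) (Val.num (n + m))
  | pair : ∀ {a b va vb}, Eval a va → Eval b vb →
      Eval (Expr.pair a b) (Val.pair va vb)
  | fst : ∀ {a v₁ v₂}, Eval a (Val.pair v₁ v₂) → Eval (Expr.fst a) v₁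
  | snd : ∀ {a v₁ v₂}, Eval a (Val.pair v₁ v₂) → Eval (Expr.snd a) v₂

/-- Forward slicing: evaluation extended with hole propagation. -/
inductive Fwd : Expr → Val → Prop where
  | hole : Fwd Expr.hole Val.hole
  | num : ∀ n, Fwd (Expr.num n) (Val.num n)
  | add : ∀ {a b n m}, Fwd a (Val.num n) → Fwd b (Val.num m) →
      Fwd (Expr.add a b) (Val.num (n + m))
  | addHoleL : ∀ {a b}, Fwd a Val.hole → Fwd (Expr.add a b) Val.hole
  | addHoleR : ∀ {a b v}, Fwd a v → Fwd b Val.hole → Fwd (Expr.add a b) Val.hole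
  | pair : ∀ {a b va vb}, Fwd a va → Fwd b vb →
      Fwd (Expr.pair a b) (Val.pair va vb)
  | fst : ∀ {a v₁ v₂}, Fwd a (Val.pair v₁ v₂) → Fwd (Expr.fst a) v₁
  | fstHole : ∀ {a}, Fwd a Val.hole → Fwd (Expr.fst a) Val.hole
  | snd : ∀ {a v₁ v₂}, Fwd a (Val.pair v₁ v₂) → Fwd (Expr.snd a) v₂
  | sndHole : ∀ {a}, Fwd a Val.hole → Fwd (Expr.snd a) Val.hole


lemma fwd_mono_aux : ∀ {e₁ v₁}, Fwd e₁ v₁ → ∀ {e₂ v₂}, Sq e₁ e₂ → Fwd e₂ v₂ → VSq v₁ v₂ := by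
  intro e₁ v₁ h₁
  induction h₁ with
  | hole => intro e₂ v₂ hs h₂; exact VSq.hole _
  | num n => intro e₂ v₂ hs h₂; cases hs; cases h₂; exact VSq.num n
  | add ha hb iha ihb =>
    intro e₂ v₂ hs h₂
    cases hs with
    | add hsa hsb =>
      cases h₂ with
      | add ha' hb' =>
        cases iha hsa ha'; cases ihb hsb hb'; exact VSq.num _
      | addHoleL ha' => cases iha hsa ha'
      | addHoleR ha' hb' => cases ihb hsb hb'
  | addHoleL ha iha => intro e₂ v₂ hs h₂; exact VSq.hole _
  | addHoleR ha hb iha ihb => intro e₂ v₂ hs h₂; exact VSq.hole _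
  | pair ha hb iha ihb =>
    intro e₂ v₂ hs h₂
    cases hs with
    | pair hsa hsb =>
      cases h₂ with
      | pair ha' hb' => exact VSq.pair (iha hsa ha') (ihb hsb hb')
  | fst ha iha =>
    intro e₂ v₂ hs h₂
    cases hs with
    | fst hsa =>
      cases h₂ with
      | fst ha' =>
        cases iha hsa ha' with
        | pair h1 h2 => exact h1
      | fstHole ha' => cases iha hsa ha'
  | fstHole ha iha => intro e₂ v₂ hs h₂; exact VSq.hole _
  | snd ha iha =>
    intro e₂ v₂ hs h₂
    cases hs with
    | snd hsa =>
      cases h₂ with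
      | snd ha' =>
        cases iha hsa ha' with
        | pair h1 h2 => exact h2
      | sndHole ha' => cases iha hsa ha'
  | sndHole ha iha => intro e₂ v₂ hs h₂; exact VSq.hole _

theorem fwd_monotone :
    ∀ e v e₁ e₂ v₁ v₂, Eval e v → Sq e₁ e₂ → Sq e₂ e →
      Fwd e₁ v₁ → Fwd e₂ v₂ → VSq v₁ v₂ := by
  intro e v e₁ e₂ v₁ v₂ _ hs _ h₁ h₂
  exact fwd_mono_aux h₁ hs h₂
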